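/- arXiv:2508.05778 — 2 statements merged into one kernel-verified Lean document; each statement's English description precedes it below -/
import Mathlib

section
/- Let u, û : ℝ → ℝ^d be differentiable, with du/dt = F(u), y = H(u), and dû/dt = F(û) + (∂T(û))⁻¹ B (y − H(û)), where T : ℝ^d → ℝ^d is C¹ with invertible Jacobian ∂T everywhere and satisfies ∂T(v) F(v) = A T(v) + B H(v) for all v. Then the transformed error E(t) = T(û(t)) − T(u(t)) satisfies the linear ODE dE/dt = A E. In particular, if all eigenvalues of A have negative real part, then ‖T(û(t)) − T(u(t))‖ → 0 as t → ∞. -/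
/-!
Along the nudged dynamics the gain `(∂T)⁻¹ B` turns the innovation into `B (y - H û)`, so by the
chain rule and `∂T · F = A T + B H` we get `d/dt T(û) = A T(û) + B y`. The true trajectory obeys
the same law, its innovation being zero, and subtracting cancels `B y`: the error `E` solves
`E' = A E`. Complexifying, `E(t) = exp(t A) E(0)`; on the generalized eigenspace of an eigenvalue
`μ` the exponential acts as `e^{t μ}` times a polynomial in `t`, which tends to `0` when `Re μ < 0`.
-/

open Filter Topology NormedSpace

theorem tendsto_ofReal_pow_mul_exp_mul_atTop_nhds_zero {μ : ℂ} (hμ : μ.re < 0) (n : ℕ) :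
    Tendsto (fun t : ℝ => (t : ℂ) ^ n * Complex.exp (t * μ)) atTop (𝓝 0) := by
  rw [tendsto_zero_iff_norm_tendsto_zero]
  have h := tendsto_rpow_mul_exp_neg_mul_atTop_nhds_zero n (-μ.re) (neg_pos.mpr hμ)
  refine h.congr' ?_
  filter_upwards [eventually_ge_atTop 0] with t ht
  simp [Complex.norm_exp, Complex.norm_real, abs_of_nonneg ht, mul_comm]

section
variable {𝔸 : Type*} [NormedRing 𝔸] [NormedAlgebra ℂ 𝔸] [CompleteSpace 𝔸]

theorem exp_eq_exp_smul_exp_sub_algebraMap (x : 𝔸) (μ : ℂ) :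
    exp x = Complex.exp μ • exp (x - algebraMap ℂ 𝔸 μ) := by
  -- `exp_add_of_commute` is stated for `ℚ`-algebras
  let : NormedAlgebra ℚ 𝔸 := .restrictScalars ℚ ℂ 𝔸
  conv_lhs => rw [← add_sub_cancel (algebraMap ℂ 𝔸 μ) x]
  rw [exp_add_of_commute (Algebra.commutes μ _), ← algebraMap_exp_comm,
    ← Complex.exp_eq_exp_ℂ, Algebra.smul_def]
end

section
variable {V : Type*} [NormedAddCommGroup V] [NormedSpace ℂ V] [CompleteSpace V]

theorem exp_smul_apply_eq_sum_of_pow_apply_eq_zero {N : V →L[ℂ] V} {w : V} {k : ℕ}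
    (hk : (N ^ k) w = 0) (z : ℂ) :
    exp (z • N) w = ∑ n ∈ Finset.range k, ((n.factorial : ℂ)⁻¹ * z ^ n) • (N ^ n) w := by
  have hterm (n : ℕ) : (((n.factorial : ℂ)⁻¹ • (z • N) ^ n) w) =
      ((n.factorial : ℂ)⁻¹ * z ^ n) • (N ^ n) w := by
    rw [smul_pow, smul_apply, smul_apply, smul_smul]
  have hvanish (n : ℕ) (hn : n ∉ Finset.range k) : (N ^ n) w = 0 := by
    obtain ⟨m, rfl⟩ := Nat.exists_eq_add_of_le (not_lt.mp (Finset.mem_range.not.mp hn))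
    rw [add_comm, pow_add, mul_apply_eq_comp, hk, map_zero]
  rw [exp_eq_tsum ℂ, ← ContinuousLinearMap.apply_apply w,
    (ContinuousLinearMap.apply ℂ V w).map_tsum (expSeries_summable' _)]
  simp only [ContinuousLinearMap.apply_apply, hterm]
  exact tsum_eq_sum fun n hn => by rw [hvanish n hn, smul_zero]

theorem tendsto_exp_ofReal_smul_apply_of_mem_maxGenEigenspace {G : V →L[ℂ] V} {μ : ℂ}
    (hμ : μ.re < 0) {w : V} (hw : w ∈ Module.End.maxGenEigenspace (G : Module.End ℂ V) μ) :
    Tendsto (fun t : ℝ => exp ((t : ℂ) • G) w) atTop (𝓝 0) := by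
  obtain ⟨k, hk⟩ := (Module.End.mem_maxGenEigenspace _ _ _).mp hw
  set N := G - algebraMap ℂ (V →L[ℂ] V) μ
  have hNk : (N ^ k) w = 0 := by
    have hcoe : ((N ^ k : V →L[ℂ] V) : Module.End ℂ V) = ((G : Module.End ℂ V) - μ • 1) ^ k := by
      simp [N, ContinuousLinearMap.toLinearMap_pow, Algebra.algebraMap_eq_smul_one]
    exact (LinearMap.congr_fun hcoe w).trans hk
  have hexp (t : ℝ) : exp ((t : ℂ) • G) w = ∑ n ∈ Finset.range k,
      (n.factorial : ℂ)⁻¹ • (((t : ℂ) ^ n * Complex.exp (t * μ)) • (N ^ n) w) := by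
    have hshift : (t : ℂ) • G - algebraMap ℂ _ (t * μ) = (t : ℂ) • N := by
      rw [smul_sub, map_mul, ← Algebra.smul_def]
    rw [exp_eq_exp_smul_exp_sub_algebraMap _ (t * μ), hshift, smul_apply,
      exp_smul_apply_eq_sum_of_pow_apply_eq_zero hNk, Finset.smul_sum]
    refine Finset.sum_congr rfl fun n _ => ?_
    rw [smul_smul, smul_smul, mul_left_comm, mul_comm (Complex.exp _)]
  simp_rw [hexp]
  simpa using tendsto_finsetSum (Finset.range k) fun n _ =>
    ((tendsto_ofReal_pow_mul_exp_mul_atTop_nhds_zero hμ n).smul_const ((N ^ n) w)).const_smul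
      (n.factorial : ℂ)⁻¹

theorem hasDerivAt_exp_ofReal_smul_apply (G : V →L[ℂ] V) (v : V) (t : ℝ) :
    HasDerivAt (fun s : ℝ => exp ((s : ℂ) • G) v) (G (exp ((t : ℂ) • G) v)) t := by
  have h := (ContinuousLinearMap.apply ℂ V v).hasFDerivAt.comp_hasDerivAt (t : ℂ)
    (hasDerivAt_exp_smul_const' G (t : ℂ))
  simpa [Function.comp_def] using h.scomp t Complex.ofRealCLM.hasDerivAt

theorem eq_exp_ofReal_smul_apply_of_hasDerivAt (G : V →L[ℂ] V) {f : ℝ → V}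
    (hf : ∀ t, HasDerivAt f (G (f t)) t) (t : ℝ) : f t = exp ((t : ℂ) • G) (f 0) := by
  have := ODE_solution_unique_univ (v := fun _ => G) (s := fun _ => Set.univ) (K := ‖G‖₊)
    (fun _ => G.lipschitz.lipschitzOnWith) (fun t => ⟨hf t, trivial⟩)
    (fun t => ⟨hasDerivAt_exp_ofReal_smul_apply G (f 0) t, trivial⟩) (t₀ := 0) (by simp)
  exact congrFun this t

theorem tendsto_exp_ofReal_smul_apply_of_forall_re_neg [FiniteDimensional ℂ V] {G : V →L[ℂ] V}
    (hG : ∀ μ ∈ spectrum ℂ G, μ.re < 0) (v : V) :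
    Tendsto (fun t : ℝ => exp ((t : ℂ) • G) v) atTop (𝓝 0) := by
  have hv : v ∈ ⨆ μ, Module.End.maxGenEigenspace (G : Module.End ℂ V) μ := by
    rw [Module.End.iSup_maxGenEigenspace_eq_top]; trivial
  induction hv using Submodule.iSup_induction' with
  | mem μ w hw =>
    rcases eq_or_ne w 0 with rfl | hw0
    · simp
    have hμ : μ ∈ spectrum ℂ G := by
      rw [ContinuousLinearMap.spectrum_eq, ← Module.End.hasEigenvalue_iff_mem_spectrum]
      exact Module.End.HasUnifEigenvalue.lt one_pos
        ((Submodule.ne_bot_iff _).mpr ⟨w, hw, hw0⟩)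
    exact tendsto_exp_ofReal_smul_apply_of_mem_maxGenEigenspace (hG μ hμ) hw
  | zero => simp
  | add x y _ _ hx hy => simpa using hx.add hy
end

namespace EuclideanSpace

noncomputable def ofRealCLM (n : Type*) [Fintype n] :
    EuclideanSpace ℝ n →L[ℝ] EuclideanSpace ℂ n :=
  LinearMap.toContinuousLinearMap
    { toFun := fun x => WithLp.toLp 2 fun i => (x i : ℂ)
      map_add' := fun x y => PiLp.ext fun i => Complex.ofReal_add (x i) (y i)
      map_smul' := fun r x => PiLp.ext fun i => Complex.ofReal_mul r (x i) }

variable {n : Type*} [Fintype n]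

@[simp]
theorem ofRealCLM_apply (x : EuclideanSpace ℝ n) (i : n) : ofRealCLM n x i = (x i : ℂ) := rfl

@[simp]
theorem norm_ofRealCLM (x : EuclideanSpace ℝ n) : ‖ofRealCLM n x‖ = ‖x‖ := by
  simp [EuclideanSpace.norm_eq]

theorem ofRealCLM_toEuclideanCLM [DecidableEq n] (A : Matrix n n ℝ) (x : EuclideanSpace ℝ n) :
    ofRealCLM n (Matrix.toEuclideanCLM (𝕜 := ℝ) A x) =
      Matrix.toEuclideanCLM (𝕜 := ℂ) (A.map Complex.ofReal) (ofRealCLM n x) := by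
  ext i
  simp [Matrix.mulVec, dotProduct]

end EuclideanSpace

theorem tendsto_norm_atTop_of_hasDerivAt_toEuclideanCLM {n : Type*} [Fintype n] [DecidableEq n]
    {A : Matrix n n ℝ} (hA : ∀ μ ∈ spectrum ℂ (A.map Complex.ofReal), μ.re < 0)
    {e : ℝ → EuclideanSpace ℝ n}
    (he : ∀ t, HasDerivAt e (Matrix.toEuclideanCLM (𝕜 := ℝ) A (e t)) t) :
    Tendsto (fun t => ‖e t‖) atTop (𝓝 0) := by
  set G := Matrix.toEuclideanCLM (𝕜 := ℂ) (A.map Complex.ofReal)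
  have hG : ∀ μ ∈ spectrum ℂ G, μ.re < 0 := by rwa [AlgEquiv.spectrum_eq]
  have hf (t : ℝ) : HasDerivAt (fun s => EuclideanSpace.ofRealCLM n (e s))
      (G (EuclideanSpace.ofRealCLM n (e t))) t := by
    rw [← EuclideanSpace.ofRealCLM_toEuclideanCLM]
    exact (EuclideanSpace.ofRealCLM n).hasFDerivAt.comp_hasDerivAt t (he t)
  have hdecay := tendsto_zero_iff_norm_tendsto_zero.mp
    (tendsto_exp_ofReal_smul_apply_of_forall_re_neg hG (EuclideanSpace.ofRealCLM n (e 0)))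
  refine hdecay.congr fun t => ?_
  rw [← eq_exp_ofReal_smul_apply_of_hasDerivAt G hf t, EuclideanSpace.norm_ofRealCLM]

section Observer
variable {E Y : Type*} [NormedAddCommGroup E] [NormedSpace ℝ E] [AddCommGroup Y] [Module ℝ Y]
  {F : E → E} {H : E → Y} {T : E → E} {A : E →L[ℝ] E} {B : Y →ₗ[ℝ] E}

theorem hasDerivAt_comp_of_hasDerivAt_observer {x : ℝ → E} {y : ℝ → Y} {t : ℝ}
    (hT : DifferentiableAt ℝ T (x t)) (hinv : IsUnit (fderiv ℝ T (x t)))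
    (hPDE : fderiv ℝ T (x t) (F (x t)) = A (T (x t)) + B (H (x t)))
    (hx : HasDerivAt x (F (x t) + Ring.inverse (fderiv ℝ T (x t)) (B (y t - H (x t)))) t) :
    HasDerivAt (fun s => T (x s)) (A (T (x t)) + B (y t)) t := by
  have hcancel : fderiv ℝ T (x t) (Ring.inverse (fderiv ℝ T (x t)) (B (y t - H (x t)))) =
      B (y t - H (x t)) := by
    rw [← mul_apply_eq_comp, Ring.mul_inverse_cancel _ hinv, one_apply_eq_self]
  refine (hT.hasFDerivAt.comp_hasDerivAt t hx).congr_deriv ?_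
  rw [map_add, hPDE, hcancel, map_sub]
  abel

theorem hasDerivAt_sub_of_hasDerivAt_observer (hT : Differentiable ℝ T)
    (hinv : ∀ v, IsUnit (fderiv ℝ T v)) (hPDE : ∀ v, fderiv ℝ T v (F v) = A (T v) + B (H v))
    {u uhat : ℝ → E} {y : ℝ → Y} (hu : ∀ t, HasDerivAt u (F (u t)) t) (hy : ∀ t, y t = H (u t))
    (huhat : ∀ t, HasDerivAt uhat
      (F (uhat t) + Ring.inverse (fderiv ℝ T (uhat t)) (B (y t - H (uhat t)))) t) (t : ℝ) :
    HasDerivAt (fun s => T (uhat s) - T (u s)) (A (T (uhat t) - T (u t))) t := by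
  have hu' : HasDerivAt u (F (u t) + Ring.inverse (fderiv ℝ T (u t)) (B (y t - H (u t)))) t := by
    simpa [hy] using hu t
  refine ((hasDerivAt_comp_of_hasDerivAt_observer (hT _) (hinv _) (hPDE _) (huhat t)).sub
    (hasDerivAt_comp_of_hasDerivAt_observer (hT _) (hinv _) (hPDE _) hu')).congr_deriv ?_
  rw [map_sub]
  abel

end Observer

theorem kkl_identity_observer {d p : ℕ}
    (F : EuclideanSpace ℝ (Fin d) → EuclideanSpace ℝ (Fin d))
    (H : EuclideanSpace ℝ (Fin d) → EuclideanSpace ℝ (Fin p))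
    (A : Matrix (Fin d) (Fin d) ℝ) (B : Matrix (Fin d) (Fin p) ℝ)
    (T : EuclideanSpace ℝ (Fin d) → EuclideanSpace ℝ (Fin d))
    (hT : ContDiff ℝ 1 T)
    (hinv : ∀ v, IsUnit (fderiv ℝ T v))
    (hPDE : ∀ v, fderiv ℝ T v (F v) =
      Matrix.toEuclideanCLM (𝕜 := ℝ) A (T v) + Matrix.toEuclideanLin (𝕜 := ℝ) B (H v))
    (u uhat : ℝ → EuclideanSpace ℝ (Fin d))
    (y : ℝ → EuclideanSpace ℝ (Fin p))
    (hu : ∀ t, HasDerivAt u (F (u t)) t)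
    (hy : ∀ t, y t = H (u t))
    (huhat : ∀ t, HasDerivAt uhat
      (F (uhat t) + Ring.inverse (fderiv ℝ T (uhat t))
        (Matrix.toEuclideanLin (𝕜 := ℝ) B (y t - H (uhat t)))) t) :
    (∀ t, HasDerivAt (fun s => T (uhat s) - T (u s))
        (Matrix.toEuclideanCLM (𝕜 := ℝ) A (T (uhat t) - T (u t))) t) ∧
    ((∀ μ ∈ spectrum ℂ (A.map Complex.ofReal), μ.re < 0) →
      Tendsto (fun t => ‖T (uhat t) - T (u t)‖) atTop (𝓝 0)) := by
  have hE := hasDerivAt_sub_of_hasDerivAt_observer (hT.differentiable one_ne_zero) hinv hPDE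
    hu hy huhat
  exact ⟨hE, fun hA => tendsto_norm_atTop_of_hasDerivAt_toEuclideanCLM hA hE⟩
end

section
/- Let ũ, û : ℝ → ℝ^d be differentiable with dũ/dt = F(ũ) + G(ũ, y) and dû/dt = F(û) + (∂T(û))⁻¹ B (y − H(û)), where T is C¹ with everywhere invertible Jacobian satisfying ∂T(v) F(v) = A T(v) + B H(v) for all v, and y : ℝ → ℝ^p. Then E(t) := T(ũ(t)) − T(û(t)) satisfies dE/dt = A E + R(t), where R(t) = ∂T(ũ(t)) [ G(ũ(t), y(t)) − (∂T(ũ(t)))⁻¹ B (y(t) − H(ũ(t))) ]. -/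
/-! In the coordinates `z = T(u)` the identity `∂T(v) F(v) = A T(v) + B H(v)` linearises the
drift: along any trajectory `u' = F(u) + w` one gets `(T ∘ u)' = A T(u) + B H(u) + ∂T(u) w`.
For the observer `û` the correction `w` is built so that `∂T(û) w = B (y − H(û))`, which gives
`(T ∘ û)' = A T(û) + B y`; for `ũ` the same computation leaves `A T(ũ) + B y + R`, and
subtracting the two cancels the output injection `B y`. -/

theorem ContinuousLinearMap.apply_ringInverse_apply {R M : Type*} [Semiring R]
    [TopologicalSpace M] [AddCommMonoid M] [ContinuousAdd M] [Module R M] {L : M →L[R] M} (hL : IsUnit L) (x : M) :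
    L (Ring.inverse L x) = x :=
  DFunLike.congr_fun (Ring.mul_inverse_cancel L hL) x

section TransformedDynamics

variable {E Y : Type*} [NormedAddCommGroup E] [NormedSpace ℝ E] [AddCommGroup Y] [Module ℝ Y]
  {F : E → E} {T : E → E} {H : E → Y} {A : E →L[ℝ] E} {K : Y →ₗ[ℝ] E} {u : ℝ → E}

theorem HasDerivAt.comp_of_intertwining {t : ℝ} {w : E}
    (hT : DifferentiableAt ℝ T (u t))
    (hTF : fderiv ℝ T (u t) (F (u t)) = A (T (u t)) + K (H (u t)))
    (hu : HasDerivAt u (F (u t) + w) t) :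
    HasDerivAt (fun s => T (u s)) (A (T (u t)) + K (H (u t)) + fderiv ℝ T (u t) w) t := by
  have h := hT.hasFDerivAt.comp_hasDerivAt t hu
  rwa [map_add, hTF] at h

theorem HasDerivAt.comp_of_intertwining_of_observer {t : ℝ} {y : Y}
    (hT : DifferentiableAt ℝ T (u t)) (hinv : IsUnit (fderiv ℝ T (u t)))
    (hTF : fderiv ℝ T (u t) (F (u t)) = A (T (u t)) + K (H (u t)))
    (hu : HasDerivAt u (F (u t) + Ring.inverse (fderiv ℝ T (u t)) (K (y - H (u t)))) t) :
    HasDerivAt (fun s => T (u s)) (A (T (u t)) + K y) t := by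
  convert hu.comp_of_intertwining hT hTF using 1
  rw [ContinuousLinearMap.apply_ringInverse_apply hinv, map_sub]
  abel

end TransformedDynamics

theorem nnn_error_dynamics {d p : ℕ}
    (F : EuclideanSpace ℝ (Fin d) → EuclideanSpace ℝ (Fin d))
    (H : EuclideanSpace ℝ (Fin d) → EuclideanSpace ℝ (Fin p))
    (G : EuclideanSpace ℝ (Fin d) → EuclideanSpace ℝ (Fin p) → EuclideanSpace ℝ (Fin d))
    (A : Matrix (Fin d) (Fin d) ℝ) (B : Matrix (Fin d) (Fin p) ℝ)
    (T : EuclideanSpace ℝ (Fin d) → EuclideanSpace ℝ (Fin d))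
    (hT : ContDiff ℝ 1 T)
    (hinv : ∀ v, IsUnit (fderiv ℝ T v))
    (hPDE : ∀ v, fderiv ℝ T v (F v) =
      Matrix.toEuclideanCLM (𝕜 := ℝ) A (T v) + Matrix.toEuclideanLin (𝕜 := ℝ) B (H v))
    (utilde uhat : ℝ → EuclideanSpace ℝ (Fin d))
    (y : ℝ → EuclideanSpace ℝ (Fin p))
    (hutilde : ∀ t, HasDerivAt utilde (F (utilde t) + G (utilde t) (y t)) t)
    (huhat : ∀ t, HasDerivAt uhat
      (F (uhat t) + Ring.inverse (fderiv ℝ T (uhat t))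
        (Matrix.toEuclideanLin (𝕜 := ℝ) B (y t - H (uhat t)))) t)
    (R : ℝ → EuclideanSpace ℝ (Fin d))
    (hRdef : ∀ t, R t = fderiv ℝ T (utilde t)
      (G (utilde t) (y t) - Ring.inverse (fderiv ℝ T (utilde t))
        (Matrix.toEuclideanLin (𝕜 := ℝ) B (y t - H (utilde t))))) :
    ∀ t, HasDerivAt (fun s => T (utilde s) - T (uhat s))
      (Matrix.toEuclideanCLM (𝕜 := ℝ) A (T (utilde t) - T (uhat t)) + R t) t := by
  intro t
  have hTdiff := hT.differentiable one_ne_zero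
  have hnudged := (hutilde t).comp_of_intertwining (hTdiff _) (hPDE _)
  have hobserver := (huhat t).comp_of_intertwining_of_observer (hTdiff _) (hinv _) (hPDE _)
  refine (hnudged.sub hobserver).congr_deriv ?_
  simp only [hRdef, map_sub, ContinuousLinearMap.apply_ringInverse_apply (hinv _)]
  abel
end
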